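/- The expected loss L(x; G, α, β, δ, γ, T) = ∫₀^T Σ_i w_i C_i(t) dt, viewed as a function of the attack strategy x ∈ ℝ₊^N, is monotone: if 0 ≤ x ≤ y componentwise, then L(x) ≤ L(y). -/

import Mathlib

/-!
The SCS field is cooperative on the unit cube, and the proof is a Kamke-type comparison argument.
For a finite family `g` with `g ≤ 0` initially, if every component touching a level `E > 0` while
the others stay below it grows at rate at most `K * E`, then `g` stays `≤ 0`: the maximum of the
family never crosses the barrier `ε * exp (L * t)` for `L > K`, and `ε → 0`. At a lower contact
`C_i = -E` the infection term `(α s_i + β ∑ a_ji C_j) (1 - C_i)` is at least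
`-β (∑ a_ji) E (1 + E)`, so `C` stays nonnegative; then at `C_i ≥ 1` the field points inward, so
`C` stays in `[0,1]^N`. Inside the cube the field is nondecreasing in the strategy and in each
`C_j`, `j ≠ i` (as `1 - C_i ≥ 0` and `a_ji ≥ 0`); applied to `Cx - Cy` this gives `Cx ≤ Cy`, and
the loss integrand is a positive combination of the `C_i`.
-/

/-- The right-hand side of the SCS model. -/
noncomputable def scsF {N : ℕ} (a : Fin N → Fin N → ℝ) (w x : Fin N → ℝ) (α β δ γ : ℝ)
    (C : Fin N → ℝ) : Fin N → ℝ :=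
  fun i => (1 / (δ * w i)) * (α * x i + β * ∑ j, a j i * C j) * (1 - C i) - γ * w i * C i

open Set Filter Topology

theorem sum_mul_le_sum_mul_of_le {ι : Type*} [Fintype ι] {c f : ι → ℝ} {E : ℝ}
    (hc : ∀ j, 0 ≤ c j) (hf : ∀ j, f j ≤ E) :
    ∑ j, c j * f j ≤ (∑ j, c j) * E := by
  rw [Finset.sum_mul]
  exact Finset.sum_le_sum fun j _ => mul_le_mul_of_nonneg_left (hf j) (hc j)

section Fencing

variable {ι : Type*} [Fintype ι] {g d : ι → ℝ → ℝ}

theorem eventually_slope_sup'_lt [Nonempty ι] {t r : ℝ} (hg : ∀ i, HasDerivAt (g i) (d i t) t)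
    (hr : ∀ i, g i t = Finset.univ.sup' Finset.univ_nonempty (g · t) → d i t < r) :
    ∀ᶠ z in 𝓝[>] t, slope (fun s => Finset.univ.sup' Finset.univ_nonempty (g · s)) t z < r := by
  set f : ℝ → ℝ := fun s => Finset.univ.sup' Finset.univ_nonempty (g · s)
  have below_line : ∀ i, ∀ᶠ z in 𝓝[>] t, g i z < f t + r * (z - t) := by
    intro i
    rcases (Finset.le_sup' (g · t) (Finset.mem_univ i)).eq_or_lt with hmax | hlt
    · have hslope : ∀ᶠ z in 𝓝[>] t, slope (g i) t z < r :=
        ((hasDerivAt_iff_tendsto_slope.1 (hg i)).eventually_lt_const (hr i hmax)).filter_mono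
          (nhdsWithin_mono t fun z hz => ne_of_gt hz)
      filter_upwards [hslope, self_mem_nhdsWithin] with z hz hzt
      rw [slope_def_field, div_lt_iff₀ (sub_pos.2 hzt)] at hz
      linarith
    · have hcont : ContinuousAt (fun z => f t + r * (z - t) - g i z) t := by
        have := (hg i).continuousAt
        fun_prop
      have hpos : 0 < f t + r * (t - t) - g i t := by simpa using hlt
      filter_upwards [nhdsWithin_le_nhds (hcont.eventually_const_lt hpos)] with z hz
      linarith
  filter_upwards [eventually_all.2 below_line, self_mem_nhdsWithin] with z hz hzt
  have hfz : f z < f t + r * (z - t) := (Finset.sup'_lt_iff _).2 fun i _ => hz i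
  rw [slope_def_field, div_lt_iff₀ (sub_pos.2 hzt)]
  linarith

theorem forall_le_of_contact_deriv_lt [Nonempty ι] {a b : ℝ} {B B' : ℝ → ℝ}
    (hg : ∀ i, ∀ t ∈ Icc a b, HasDerivAt (g i) (d i t) t) (hB : ∀ t, HasDerivAt B (B' t) t)
    (hinit : ∀ i, g i a ≤ B a)
    (hcontact : ∀ t ∈ Ico a b, (∀ j, g j t ≤ B t) → ∀ i, g i t = B t → d i t < B' t) :
    ∀ t ∈ Icc a b, ∀ i, g i t ≤ B t := by
  classical
  set f : ℝ → ℝ := fun s => Finset.univ.sup' Finset.univ_nonempty (g · s)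
  have hmax : ∀ s, (Finset.univ.filter fun i => g i s = f s).Nonempty := fun s => by
    obtain ⟨i, -, hi⟩ := Finset.exists_mem_eq_sup' Finset.univ_nonempty (g · s)
    exact ⟨i, Finset.mem_filter.2 ⟨Finset.mem_univ i, hi.symm⟩⟩
  set f' : ℝ → ℝ := fun s => (Finset.univ.filter fun i => g i s = f s).sup' (hmax s) (d · s)
  have hf'_lt : ∀ s r, f' s < r ↔ ∀ i, g i s = f s → d i s < r := fun s r => by
    simp [f', Finset.sup'_lt_iff]
  have hfB : ∀ t ∈ Icc a b, f t ≤ B t := by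
    refine image_le_of_liminf_slope_right_lt_deriv_boundary (f' := f')
      (fun s hs => (ContinuousAt.finset_sup'_apply Finset.univ_nonempty
        fun i _ => (hg i s hs).continuousAt).continuousWithinAt)
      (fun s hs r hr => (eventually_slope_sup'_lt (fun i => hg i s (Ico_subset_Icc_self hs))
        ((hf'_lt s r).1 hr)).frequently)
      (Finset.sup'_le _ _ fun i _ => hinit i) hB fun s hs hfs => (hf'_lt s _).2 ?_
    have hle : ∀ j, g j s ≤ B s := fun j => hfs ▸ Finset.le_sup' (g · s) (Finset.mem_univ j)
    exact fun i hi => hcontact s hs hle i (hi.trans hfs)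
  exact fun t ht i => (Finset.le_sup' (g · t) (Finset.mem_univ i)).trans (hfB t ht)

theorem forall_nonpos_of_contact_deriv_le {a b K : ℝ}
    (hg : ∀ i, ∀ t ∈ Icc a b, HasDerivAt (g i) (d i t) t) (hinit : ∀ i, g i a ≤ 0)
    (hcontact : ∀ t ∈ Ico a b, ∀ E ∈ Ioc (0 : ℝ) 1, (∀ j, g j t ≤ E) → ∀ i, g i t = E →
      d i t ≤ K * E) :
    ∀ t ∈ Icc a b, ∀ i, g i t ≤ 0 := by
  cases isEmpty_or_nonempty ι
  · exact fun _ _ i => isEmptyElim i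
  intro t ht i
  -- the barrier `ε * exp (L * (t - b))` must outgrow the contact bound `K * E` strictly
  set L := max K 0 + 1
  have hL : 0 < L := by positivity
  have hbarrier : ∀ ε ∈ Ioc (0 : ℝ) 1, g i t ≤ ε := by
    intro ε hε
    have hB : ∀ s, HasDerivAt (fun s => ε * Real.exp (L * (s - b)))
        (L * (ε * Real.exp (L * (s - b)))) s := fun s =>
      ((((hasDerivAt_id s).sub_const b).const_mul L).exp.const_mul ε).congr_deriv
        (by simp only [id]; ring)
    have hB_le : ∀ s ≤ b, ε * Real.exp (L * (s - b)) ≤ ε := fun s hs =>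
      mul_le_of_le_one_right hε.1.le (Real.exp_le_one_iff.2 (by nlinarith))
    have := forall_le_of_contact_deriv_lt hg hB
      (fun j => (hinit j).trans (by have := hε.1; positivity))
      (fun s hs hle j hj => by
        have hE : ε * Real.exp (L * (s - b)) ∈ Ioc (0 : ℝ) 1 :=
          ⟨by have := hε.1; positivity, (hB_le s hs.2.le).trans hε.2⟩
        calc d j s ≤ K * _ := hcontact s hs _ hE hle j hj
          _ < L * _ := mul_lt_mul_of_pos_right (by simp [L]; linarith [le_max_left K 0]) hE.1)
      t ht i
    exact this.trans (hB_le t ht.2)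
  exact ge_of_tendsto (tendsto_nhdsWithin_of_tendsto_nhds tendsto_id)
    (mem_of_superset (Ioc_mem_nhdsGT one_pos) hbarrier)

end Fencing

section Contact

variable {N : ℕ} {a : Fin N → Fin N → ℝ} {w s x y C u v : Fin N → ℝ} {α β δ γ K E : ℝ}
  {i : Fin N}

theorem neg_scsF_le_of_lower_contact (ha : ∀ j, 0 ≤ a j i) (hw : 0 < w i) (hα : 0 ≤ α)
    (hβ : 0 ≤ β) (hδ : 0 < δ) (hγ : 0 ≤ γ) (hs : 0 ≤ s i)
    (hK : 2 * β * (∑ j, a j i) / (δ * w i) ≤ K) (hE : E ∈ Ioc 0 1)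
    (hC : ∀ j, -C j ≤ E) (hCi : -C i = E) :
    -scsF a w s α β δ γ C i ≤ K * E := by
  have hS : -((∑ j, a j i) * E) ≤ ∑ j, a j i * C j := by
    have := sum_mul_le_sum_mul_of_le ha hC
    simp only [mul_neg, Finset.sum_neg_distrib] at this
    linarith
  rw [div_eq_mul_one_div] at hK
  obtain ⟨hE0, hE1⟩ := hE
  set A := ∑ j, a j i
  set S := ∑ j, a j i * C j
  set D := 1 / (δ * w i)
  have hD : 0 < D := by positivity
  have hA : 0 ≤ A := Finset.sum_nonneg fun j _ => ha j
  have hP : 0 ≤ α * s i + β * S + β * A * E := by nlinarith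
  simp only [scsF]
  rw [show C i = -E by linarith]
  nlinarith [mul_nonneg (mul_nonneg hD.le (by linarith : 0 ≤ 1 + E)) hP,
    mul_nonneg (mul_nonneg (mul_nonneg hβ hA) hD.le) (mul_nonneg hE0.le (by linarith : 0 ≤ 1 - E)),
    mul_nonneg (sub_nonneg.2 hK) hE0.le, mul_nonneg (mul_nonneg hγ hw.le) hE0.le]

theorem scsF_nonpos_of_one_le (ha : ∀ j, 0 ≤ a j i) (hw : 0 < w i) (hα : 0 ≤ α)
    (hβ : 0 ≤ β) (hδ : 0 < δ) (hγ : 0 ≤ γ) (hs : 0 ≤ s i) (hC : ∀ j, 0 ≤ C j) (hCi : 1 ≤ C i) :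
    scsF a w s α β δ γ C i ≤ 0 := by
  have hP : 0 ≤ α * s i + β * ∑ j, a j i * C j :=
    add_nonneg (mul_nonneg hα hs)
      (mul_nonneg hβ (Finset.sum_nonneg fun j _ => mul_nonneg (ha j) (hC j)))
  have hD : 0 < 1 / (δ * w i) := by positivity
  have := mul_nonpos_of_nonneg_of_nonpos (mul_nonneg hD.le hP) (sub_nonpos.2 hCi)
  have := mul_nonneg (mul_nonneg hγ hw.le) (zero_le_one.trans hCi)
  simp only [scsF]
  linarith

theorem scsF_sub_scsF_le_of_contact (ha : ∀ j, 0 ≤ a j i) (hw : 0 < w i) (hα : 0 ≤ α)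
    (hβ : 0 ≤ β) (hδ : 0 < δ) (hγ : 0 ≤ γ) (hy : 0 ≤ y i) (hxy : x i ≤ y i)
    (hK : 2 * β * (∑ j, a j i) / (δ * w i) ≤ K) (hE : 0 ≤ E)
    (hu : u i ∈ Icc 0 1) (hv : ∀ j, 0 ≤ v j) (huv : ∀ j, u j - v j ≤ E) (huvi : u i - v i = E) :
    scsF a w x α β δ γ u i - scsF a w y α β δ γ v i ≤ K * E := by
  have hS : ∑ j, a j i * u j - ∑ j, a j i * v j ≤ (∑ j, a j i) * E := by
    rw [← Finset.sum_sub_distrib]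
    simpa only [mul_sub] using sum_mul_le_sum_mul_of_le ha huv
  have hSv : 0 ≤ ∑ j, a j i * v j := Finset.sum_nonneg fun j _ => mul_nonneg (ha j) (hv j)
  rw [div_eq_mul_one_div] at hK
  obtain ⟨hu0, hu1⟩ := hu
  set A := ∑ j, a j i
  set D := 1 / (δ * w i)
  have hD : 0 < D := by positivity
  have hA : 0 ≤ A := Finset.sum_nonneg fun j _ => ha j
  set Pu := α * x i + β * ∑ j, a j i * u j
  set Pv := α * y i + β * ∑ j, a j i * v j
  have hPv : 0 ≤ Pv := add_nonneg (mul_nonneg hα hy) (mul_nonneg hβ hSv)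
  have hPuv : Pu - Pv ≤ β * A * E := by nlinarith
  have hPuv' : (Pu - Pv) * (1 - u i) ≤ β * A * E := by
    rcases le_total (Pu - Pv) 0 with h | h
    · nlinarith [mul_nonneg (mul_nonneg hβ hA) hE]
    · nlinarith
  simp only [scsF]
  rw [show v i = u i - E by linarith]
  nlinarith [mul_le_mul_of_nonneg_left hPuv' hD.le, mul_nonneg hD.le (mul_nonneg hPv hE),
    mul_nonneg (sub_nonneg.2 hK) hE, mul_nonneg (mul_nonneg hγ hw.le) hE,
    mul_nonneg (mul_nonneg (mul_nonneg hβ hA) hD.le) hE]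

end Contact

section Solutions

variable {N : ℕ} {a : Fin N → Fin N → ℝ} {w s x y : Fin N → ℝ} {α β δ γ T : ℝ}
  {C Cx Cy : ℝ → Fin N → ℝ}

theorem scs_solution_nonneg (ha : ∀ i j, 0 ≤ a i j) (hw : ∀ i, 0 < w i) (hα : 0 ≤ α)
    (hβ : 0 ≤ β) (hδ : 0 < δ) (hγ : 0 ≤ γ) (hs : ∀ i, 0 ≤ s i)
    (hC : ∀ t ∈ Icc 0 T, HasDerivAt C (scsF a w s α β δ γ (C t)) t) (h0 : ∀ i, 0 ≤ C 0 i) :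
    ∀ t ∈ Icc 0 T, ∀ i, 0 ≤ C t i := by
  obtain ⟨K, hK⟩ := Finite.exists_le fun i => 2 * β * (∑ j, a j i) / (δ * w i)
  have := forall_nonpos_of_contact_deriv_le (g := fun i t => -C t i)
    (fun i t ht => (hasDerivAt_pi.1 (hC t ht) i).neg) (fun i => neg_nonpos.2 (h0 i))
    fun _ _ _ hE hle i hi =>
      neg_scsF_le_of_lower_contact (ha · i) (hw i) hα hβ hδ hγ (hs i) (hK i) hE hle hi
  exact fun t ht i => neg_nonpos.1 (this t ht i)

theorem scs_solution_mem_Icc (ha : ∀ i j, 0 ≤ a i j) (hw : ∀ i, 0 < w i) (hα : 0 ≤ α)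
    (hβ : 0 ≤ β) (hδ : 0 < δ) (hγ : 0 ≤ γ) (hs : ∀ i, 0 ≤ s i)
    (hC : ∀ t ∈ Icc 0 T, HasDerivAt C (scsF a w s α β δ γ (C t)) t)
    (h0 : ∀ i, C 0 i ∈ Icc 0 1) :
    ∀ t ∈ Icc 0 T, ∀ i, C t i ∈ Icc 0 1 := by
  have hnonneg := scs_solution_nonneg ha hw hα hβ hδ hγ hs hC fun i => (h0 i).1
  have := forall_nonpos_of_contact_deriv_le (g := fun i t => C t i - 1) (K := 0)
    (fun i t ht => (hasDerivAt_pi.1 (hC t ht) i).sub_const 1) (fun i => sub_nonpos.2 (h0 i).2)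
    fun t ht _ hE _ i hi => by
      rw [zero_mul]
      exact scsF_nonpos_of_one_le (ha · i) (hw i) hα hβ hδ hγ (hs i)
        (hnonneg t (Ico_subset_Icc_self ht)) (by linarith [hE.1])
  exact fun t ht i => ⟨hnonneg t ht i, sub_nonpos.1 (this t ht i)⟩

theorem scs_solution_le_of_le (ha : ∀ i j, 0 ≤ a i j) (hw : ∀ i, 0 < w i) (hα : 0 ≤ α)
    (hβ : 0 ≤ β) (hδ : 0 < δ) (hγ : 0 ≤ γ) (hy : ∀ i, 0 ≤ y i) (hxy : ∀ i, x i ≤ y i)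
    (hCx : ∀ t ∈ Icc 0 T, HasDerivAt Cx (scsF a w x α β δ γ (Cx t)) t)
    (hCy : ∀ t ∈ Icc 0 T, HasDerivAt Cy (scsF a w y α β δ γ (Cy t)) t)
    (h0 : ∀ i, Cx 0 i ≤ Cy 0 i) (hCx_mem : ∀ t ∈ Icc 0 T, ∀ i, Cx t i ∈ Icc 0 1)
    (hCy_nonneg : ∀ t ∈ Icc 0 T, ∀ i, 0 ≤ Cy t i) :
    ∀ t ∈ Icc 0 T, ∀ i, Cx t i ≤ Cy t i := by
  obtain ⟨K, hK⟩ := Finite.exists_le fun i => 2 * β * (∑ j, a j i) / (δ * w i)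
  have := forall_nonpos_of_contact_deriv_le (g := fun i t => Cx t i - Cy t i)
    (fun i t ht => (hasDerivAt_pi.1 (hCx t ht) i).sub (hasDerivAt_pi.1 (hCy t ht) i))
    (fun i => sub_nonpos.2 (h0 i))
    fun t ht _ hE hle i hi =>
      have ht' := Ico_subset_Icc_self ht
      scsF_sub_scsF_le_of_contact (ha · i) (hw i) hα hβ hδ hγ (hy i) (hxy i) (hK i) hE.1.le
        (hCx_mem t ht' i) (hCy_nonneg t ht') hle hi
  exact fun t ht i => sub_nonpos.1 (this t ht i)

end Solutions

/-- Monotonicity of the expected loss in the attack strategy: if 0 ≤ x ≤ y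
componentwise, then L(x) ≤ L(y) (solutions started from the same initial
condition in [0,1]^N). -/
theorem loss_monotone_in_strategy {N : ℕ} (a : Fin N → Fin N → ℝ)
    (ha : ∀ i j, a i j = 0 ∨ a i j = 1)
    (w x y : Fin N → ℝ) (α β δ γ T : ℝ)
    (hα : 0 < α) (hβ : 0 < β) (hδ : 0 < δ) (hγ : 0 < γ)
    (hx : ∀ i, 0 ≤ x i) (hxy : ∀ i, x i ≤ y i) (hw : ∀ i, 0 < w i) (hT : 0 < T)
    (Cx Cy : ℝ → Fin N → ℝ)
    (hCx : ∀ t ∈ Set.Icc (0 : ℝ) T, HasDerivAt Cx (scsF a w x α β δ γ (Cx t)) t)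
    (hCy : ∀ t ∈ Set.Icc (0 : ℝ) T, HasDerivAt Cy (scsF a w y α β δ γ (Cy t)) t)
    (h0 : Cx 0 = Cy 0) (h0box : ∀ i, Cx 0 i ∈ Set.Icc (0 : ℝ) 1) :
    (∫ t in (0:ℝ)..T, ∑ i, w i * Cx t i) ≤ ∫ t in (0:ℝ)..T, ∑ i, w i * Cy t i := by
  have ha' : ∀ i j, 0 ≤ a i j := fun i j => by rcases ha i j with h | h <;> simp [h]
  have hy : ∀ i, 0 ≤ y i := fun i => (hx i).trans (hxy i)
  have hCx_mem := scs_solution_mem_Icc ha' hw hα.le hβ.le hδ hγ.le hx hCx h0box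
  have hCy_nonneg := scs_solution_nonneg ha' hw hα.le hβ.le hδ hγ.le hy hCy
    fun i => h0 ▸ (h0box i).1
  have hle := scs_solution_le_of_le ha' hw hα.le hβ.le hδ hγ.le hy hxy hCx hCy
    (fun i => (congrFun h0 i).le) hCx_mem hCy_nonneg
  have hint : ∀ C : ℝ → Fin N → ℝ, ContinuousOn C (Icc 0 T) →
      IntervalIntegrable (fun t => ∑ i, w i * C t i) MeasureTheory.volume 0 T := fun C hC =>
    (continuousOn_finsetSum _ fun i _ => continuousOn_const.mul
      ((continuous_apply i).comp_continuousOn (uIcc_of_le hT.le ▸ hC))).intervalIntegrable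
  exact intervalIntegral.integral_mono_on hT.le
    (hint Cx fun t ht => (hCx t ht).continuousAt.continuousWithinAt)
    (hint Cy fun t ht => (hCy t ht).continuousAt.continuousWithinAt)
    fun t ht => Finset.sum_le_sum fun i _ => mul_le_mul_of_nonneg_left (hle t ht i) (hw i).le
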